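/- Let κ be a classical process map over the disjoint union of finite sets Y, Z, W, X of classical split nodes. Then the following are equivalent. (1) There exists a real-valued function η of (Y^in, Y^out, W^in, W^out, X^out) such that for every local trace-preserving intervention τ_Z at Z (a product of classical channels, one at each node of Z) there exists a real-valued function ξ^{τ_Z} of (W^in, W^out, X^out) with κ^{τ_Z}_{YW do(X)} = η · ξ^{τ_Z}, where κ^{τ_Z}_{YW do(X)} := ∑_{X^in} ∑_{Z^in, Z^out} [κ · τ_Z] is the function of (Y^in, Y^out, W^in, W^out, X^out) obtained by summing out the X input variables and the Z variables weighted by τ_Z. (2) For every value x of X^out (do-intervention setting X^out = x), every maximally informative local intervention at W with outcome k_W, and every local intervention at Y with outcome k_Y, there exist a function a of (k_Y, k_W) and, for each local trace-preserving intervention τ_Z at Z, a function b^{τ_Z} of k_W, such that the joint outcome distribution satisfies P^{τ_Z}(k_Y, k_W) = a(k_Y, k_W) · b^{τ_Z}(k_W) for all outcomes; i.e., the conditional probability of k_Y given k_W is independent of the choice of local intervention at Z. -/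
import Mathlib


open scoped Classical
open BigOperators

noncomputable section

namespace QCM

instance setFintypeOfFintype {α : Type} [Fintype α] (S : Set α) : Fintype ↥S :=
  (Set.toFinite S).fintype

/-! ## Classical split nodes -/

/-- A joint assignment of values to the input (`false`) and output (`true`) variables
of a family of classical split nodes. -/
abbrev CAsg (V : Type) (val : V → ℕ) : Type := ∀ p : V × Bool, Fin (val p.1)

/-- `F` depends only on the variables (legs) in `L`. -/
def DependsOnlyOn {V : Type} {val : V → ℕ} (L : Set (V × Bool))
    (F : CAsg V val → ℝ) : Prop :=
  ∀ ω ω' : CAsg V val, (∀ p ∈ L, ω p = ω' p) → F ω = F ω'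

/-- A classical channel `P(out | in)` on a set of cardinality `n`. -/
def IsCChannel {n : ℕ} (P : Fin n → Fin n → ℝ) : Prop :=
  (∀ i o, 0 ≤ P i o) ∧ ∀ i, ∑ o, P i o = 1

/-- A classical process map over the split nodes `V`. -/
def IsCProcess {V : Type} [Fintype V] (val : V → ℕ) (κ : CAsg V val → ℝ) : Prop :=
  (∀ ω, 0 ≤ κ ω ∧ κ ω ≤ 1) ∧
    ∀ chan : ∀ a, Fin (val a) → Fin (val a) → ℝ, (∀ a, IsCChannel (chan a)) →
      ∑ ω : CAsg V val, κ ω * ∏ a, chan a (ω (a, false)) (ω (a, true)) = 1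

/-- A classical instrument `P(k, out | in)` with outcomes in `Fin m`. -/
def IsCInstrument {n m : ℕ} (q : Fin m → Fin n → Fin n → ℝ) : Prop :=
  (∀ k i o, 0 ≤ q k i o) ∧ ∀ i, ∑ k, ∑ o, q k i o = 1

/-- A maximally informative classical instrument. -/
def IsMaxInf {n m : ℕ} (q : Fin m → Fin n → Fin n → ℝ) : Prop :=
  ∃ gin : Fin m → Fin n, Function.Surjective gin ∧
    ∃ gout : Fin m → Fin n, ∀ k i o, q k i o ≠ 0 → i = gin k ∧ o = gout k

/-- Override the assignment `ω` on the legs in `T` by the values `t`. -/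
def ovr {V : Type} {val : V → ℕ} (T : Set (V × Bool)) (ω : CAsg V val)
    (t : ∀ p : ↥T, Fin (val p.1.1)) : CAsg V val :=
  fun p => if h : p ∈ T then t ⟨p, h⟩ else ω p


/-- The do-conditional marginal `κ^{τ_Z}_{YW do(X)}` of a classical process map: the
input variables of the nodes in `SX` and all variables of the nodes in `SZ` are summed
out, the latter weighted by the channels `locZ`.  The result is a function of the
remaining variables (it ignores the values of `ω` on the summed-out legs). -/
def cDoMarg {V : Type} [Fintype V] (val : V → ℕ) (κ : CAsg V val → ℝ) (SX SZ : Set V)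
    (locZ : ∀ a, Fin (val a) → Fin (val a) → ℝ) (ω : CAsg V val) : ℝ :=
  ∑ t : (∀ p : ↥{p : V × Bool | (p.1 ∈ SX ∧ p.2 = false) ∨ p.1 ∈ SZ}, Fin (val p.1.1)),
    κ (ovr {p : V × Bool | (p.1 ∈ SX ∧ p.2 = false) ∨ p.1 ∈ SZ} ω t) *
      ∏ a : ↥SZ, locZ a.1 (t ⟨(a.1, false), Or.inr a.2⟩) (t ⟨(a.1, true), Or.inr a.2⟩)

/-- Joint outcome probability of instruments at the nodes in `SY ∪ SW`, with a
do-intervention setting the outputs of `SX` to `x`, and channels `locZ` at the nodes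
of `SZ`. -/
def cDoProb {V : Type} [Fintype V] (val : V → ℕ) (κ : CAsg V val → ℝ)
    (SY SZ SW SX : Set V) (x : ∀ a : ↥SX, Fin (val a.1))
    (m : V → ℕ) (q : ∀ a, Fin (m a) → Fin (val a) → Fin (val a) → ℝ)
    (locZ : ∀ a, Fin (val a) → Fin (val a) → ℝ)
    (k : ∀ v : ↥(SY ∪ SW), Fin (m v.1)) : ℝ :=
  ∑ ω : CAsg V val,
    κ ω * (∏ a : ↥SX, if ω (a.1, true) = x a then 1 else 0) *
      (∏ v : ↥(SY ∪ SW), q v.1 (k v) (ω (v.1, false)) (ω (v.1, true))) *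
      (∏ a : ↥SZ, locZ a.1 (ω (a.1, false)) (ω (a.1, true)))

/-! ## Auxiliary machinery: gluing assignments along a split of the legs -/

set_option linter.unusedSectionVars false

section Glue

variable {V : Type} [Fintype V] {val : V → ℕ}

/-- The set of legs summed out in `cDoMarg`. -/
abbrev TSet (SX SZ : Set V) : Set (V × Bool) :=
  {p : V × Bool | (p.1 ∈ SX ∧ p.2 = false) ∨ p.1 ∈ SZ}

lemma sum_univ_congr {α : Type*} {i1 i2 : Fintype α} (f g : α → ℝ) (h : ∀ a, f a = g a) :
    @Finset.sum α ℝ _ (@Finset.univ α i1) f = @Finset.sum α ℝ _ (@Finset.univ α i2) g := by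
  cases Subsingleton.elim i1 i2
  exact Finset.sum_congr rfl fun a _ => h a

/-- glue an assignment on `T` with one off `T`. -/
def glue (T : Set (V × Bool)) (t : ∀ p : ↥T, Fin (val p.1.1))
    (σ : ∀ p : {p : V × Bool // p ∉ T}, Fin (val p.1.1)) : CAsg V val :=
  fun p => if h : p ∈ T then t ⟨p, h⟩ else σ ⟨p, h⟩

lemma glue_mem {T : Set (V × Bool)} (t : ∀ p : ↥T, Fin (val p.1.1))
    (σ : ∀ p : {p : V × Bool // p ∉ T}, Fin (val p.1.1)) {p : V × Bool} (h : p ∈ T) :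
    glue T t σ p = t ⟨p, h⟩ := dif_pos h

lemma glue_not_mem {T : Set (V × Bool)} (t : ∀ p : ↥T, Fin (val p.1.1))
    (σ : ∀ p : {p : V × Bool // p ∉ T}, Fin (val p.1.1)) {p : V × Bool} (h : p ∉ T) :
    glue T t σ p = σ ⟨p, h⟩ := dif_neg h

lemma glue_off {T : Set (V × Bool)} (t t' : ∀ p : ↥T, Fin (val p.1.1))
    (σ : ∀ p : {p : V × Bool // p ∉ T}, Fin (val p.1.1)) {p : V × Bool} (h : p ∉ T) :
    glue T t σ p = glue T t' σ p := by rw [glue_not_mem t σ h, glue_not_mem t' σ h]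

lemma ovr_glue (T : Set (V × Bool)) (t t' : ∀ p : ↥T, Fin (val p.1.1))
    (σ : ∀ p : {p : V × Bool // p ∉ T}, Fin (val p.1.1)) :
    ovr T (glue T t σ) t' = glue T t' σ := by
  funext p
  by_cases h : p ∈ T
  · simp [ovr, glue, h]
  · simp [ovr, glue, h]

lemma ovr_ovr (T : Set (V × Bool)) (ω : CAsg V val) (t t' : ∀ p : ↥T, Fin (val p.1.1)) :
    ovr T (ovr T ω t) t' = ovr T ω t' := by
  funext p
  by_cases h : p ∈ T
  · simp [ovr, h]
  · simp [ovr, h]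

/-- restriction of a full assignment to the legs off `T`. -/
def restr (T : Set (V × Bool)) (ω : CAsg V val) :
    ∀ p : {p : V × Bool // p ∉ T}, Fin (val p.1.1) := fun p => ω p.1

lemma glue_restr (T : Set (V × Bool)) (ω : CAsg V val) (t : ∀ p : ↥T, Fin (val p.1.1)) :
    glue T t (restr T ω) = ovr T ω t := by
  funext p
  by_cases h : p ∈ T
  · simp [ovr, glue, h]
  · simp [ovr, glue, h, restr]

lemma sum_glue (T : Set (V × Bool)) (F : CAsg V val → ℝ) :
    ∑ ω : CAsg V val, F ω =
      ∑ t : ∀ p : ↥T, Fin (val p.1.1),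
        ∑ σ : ∀ p : {p : V × Bool // p ∉ T}, Fin (val p.1.1), F (glue T t σ) := by
  rw [← Equiv.sum_comp (Equiv.piEquivPiSubtypeProd (· ∈ T) (fun p => Fin (val p.1))).symm F,
    Fintype.sum_prod_type]
  apply Finset.sum_congr rfl
  intro t _
  apply Finset.sum_congr rfl
  intro s _
  rfl

lemma cDoMarg_glue (κ : CAsg V val → ℝ) (SX SZ : Set V)
    (locZ : ∀ a, Fin (val a) → Fin (val a) → ℝ)
    (t : ∀ p : ↥(TSet SX SZ), Fin (val p.1.1))
    (σ : ∀ p : {p : V × Bool // p ∉ TSet SX SZ}, Fin (val p.1.1)) :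
    cDoMarg val κ SX SZ locZ (glue (TSet SX SZ) t σ) =
      ∑ t' : ∀ p : ↥(TSet SX SZ), Fin (val p.1.1),
        κ (glue (TSet SX SZ) t' σ) *
          ∏ a : ↥SZ, locZ a.1 (t' ⟨(a.1, false), Or.inr a.2⟩) (t' ⟨(a.1, true), Or.inr a.2⟩) := by
  apply Finset.sum_congr rfl
  intro t' _
  congr 1
  exact congrArg κ (ovr_glue (TSet SX SZ) t t' σ)

lemma cDoMarg_ovr (κ : CAsg V val → ℝ) (SX SZ : Set V)
    (locZ : ∀ a, Fin (val a) → Fin (val a) → ℝ) (ω : CAsg V val)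
    (t : ∀ p : ↥(TSet SX SZ), Fin (val p.1.1)) :
    cDoMarg val κ SX SZ locZ (ovr (TSet SX SZ) ω t) = cDoMarg val κ SX SZ locZ ω := by
  apply Finset.sum_congr rfl
  intro t' _
  congr 1
  exact congrArg κ (ovr_ovr (TSet SX SZ) ω t t')

lemma notT_of_X {SX SZ : Set V} (hZX : Disjoint SZ SX) {a : V} (ha : a ∈ SX) :
    ((a, true) : V × Bool) ∉ TSet SX SZ := by
  rintro (⟨-, hb⟩ | hZ)
  · exact Bool.noConfusion hb
  · exact Set.disjoint_left.mp hZX hZ ha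

lemma notT_of_YW {SY SZ SW SX : Set V} (hYZ : Disjoint SY SZ) (hYX : Disjoint SY SX)
    (hZW : Disjoint SZ SW) (hWX : Disjoint SW SX) {v : V} (hv : v ∈ SY ∪ SW) (b : Bool) :
    ((v, b) : V × Bool) ∉ TSet SX SZ := by
  rintro (⟨hX, -⟩ | hZ)
  · rcases hv with h | h
    · exact Set.disjoint_left.mp hYX h hX
    · exact Set.disjoint_left.mp hWX h hX
  · rcases hv with h | h
    · exact Set.disjoint_left.mp hYZ h hZ
    · exact Set.disjoint_left.mp hZW hZ h

/-- The joint outcome probability written as a sum over the non-marginalized legs of the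
do-conditional marginal times the local response functions. -/
lemma cDoProb_glue (κ : CAsg V val → ℝ) (SY SZ SW SX : Set V)
    (hYZ : Disjoint SY SZ) (hYX : Disjoint SY SX)
    (hZW : Disjoint SZ SW) (hZX : Disjoint SZ SX) (hWX : Disjoint SW SX)
    (x : ∀ a : ↥SX, Fin (val a.1))
    (m : V → ℕ) (q : ∀ a, Fin (m a) → Fin (val a) → Fin (val a) → ℝ)
    (locZ : ∀ a, Fin (val a) → Fin (val a) → ℝ)
    (k : ∀ v : ↥(SY ∪ SW), Fin (m v.1))
    (t₀ : ∀ p : ↥(TSet SX SZ), Fin (val p.1.1)) :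
    cDoProb val κ SY SZ SW SX x m q locZ k =
      ∑ σ : ∀ p : {p : V × Bool // p ∉ TSet SX SZ}, Fin (val p.1.1),
        cDoMarg val κ SX SZ locZ (glue (TSet SX SZ) t₀ σ) *
          ((∏ a : ↥SX, if glue (TSet SX SZ) t₀ σ (a.1, true) = x a then (1 : ℝ) else 0) *
            ∏ v : ↥(SY ∪ SW), q v.1 (k v) (glue (TSet SX SZ) t₀ σ (v.1, false))
              (glue (TSet SX SZ) t₀ σ (v.1, true))) := by
  rw [show cDoProb val κ SY SZ SW SX x m q locZ k =
      ∑ ω : CAsg V val, κ ω * (∏ a : ↥SX, if ω (a.1, true) = x a then (1:ℝ) else 0) *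
        (∏ v : ↥(SY ∪ SW), q v.1 (k v) (ω (v.1, false)) (ω (v.1, true))) *
        (∏ a : ↥SZ, locZ a.1 (ω (a.1, false)) (ω (a.1, true))) from rfl]
  rw [sum_glue (TSet SX SZ)]
  rw [Finset.sum_comm]
  refine sum_univ_congr _ _ fun σ => ?_
  rw [cDoMarg_glue, Finset.sum_mul]
  refine Finset.sum_congr rfl fun t _ => ?_
  have hz : (∏ a : ↥SZ, locZ a.1 (glue (TSet SX SZ) t σ (a.1, false))
        (glue (TSet SX SZ) t σ (a.1, true))) =
      ∏ a : ↥SZ, locZ a.1 (t ⟨(a.1, false), Or.inr a.2⟩) (t ⟨(a.1, true), Or.inr a.2⟩) := by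
    refine Finset.prod_congr rfl fun a _ => ?_
    rw [glue_mem t σ (Or.inr a.2 : ((a.1, false) : V × Bool) ∈ TSet SX SZ),
      glue_mem t σ (Or.inr a.2 : ((a.1, true) : V × Bool) ∈ TSet SX SZ)]
  have hx : (∏ a : ↥SX, if glue (TSet SX SZ) t σ (a.1, true) = x a then (1:ℝ) else 0) =
      ∏ a : ↥SX, if glue (TSet SX SZ) t₀ σ (a.1, true) = x a then (1:ℝ) else 0 := by
    refine Finset.prod_congr rfl fun a _ => ?_
    rw [glue_off t t₀ σ (notT_of_X hZX a.2)]
  have hyw : (∏ v : ↥(SY ∪ SW), q v.1 (k v) (glue (TSet SX SZ) t σ (v.1, false))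
        (glue (TSet SX SZ) t σ (v.1, true))) =
      ∏ v : ↥(SY ∪ SW), q v.1 (k v) (glue (TSet SX SZ) t₀ σ (v.1, false))
        (glue (TSet SX SZ) t₀ σ (v.1, true)) := by
    refine Finset.prod_congr rfl fun v _ => ?_
    rw [glue_off t t₀ σ (notT_of_YW hYZ hYX hZW hWX v.2 false),
      glue_off t t₀ σ (notT_of_YW hYZ hYX hZW hWX v.2 true)]
  rw [hz, hx, hyw]
  ring

/-- The full-readout instrument on a node of cardinality `n`. -/
lemma readout_instrument {n : ℕ} (hn : 0 < n) :
    IsCInstrument (fun (kk : Fin (n * n)) (i o : Fin n) =>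
      if finProdFinEquiv.symm kk = (i, o) then ((n : ℝ))⁻¹ else 0) := by
  constructor
  · intro k i o
    dsimp only
    split
    · positivity
    · exact le_refl 0
  · intro i
    rw [Finset.sum_comm]
    have h1 : ∀ o : Fin n,
        (∑ kk : Fin (n * n), if finProdFinEquiv.symm kk = (i, o) then ((n : ℝ))⁻¹ else 0) =
          (n : ℝ)⁻¹ := by
      intro o
      rw [← Equiv.sum_comp (finProdFinEquiv : Fin n × Fin n ≃ Fin (n * n))
        (fun kk => if finProdFinEquiv.symm kk = (i, o) then ((n : ℝ))⁻¹ else 0)]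
      simp
    rw [Finset.sum_congr rfl fun o _ => h1 o, Finset.sum_const, Finset.card_univ,
      Fintype.card_fin, nsmul_eq_mul, mul_inv_cancel₀]
    exact_mod_cast hn.ne'

lemma readout_maxinf {n : ℕ} (hn : 0 < n) :
    IsMaxInf (fun (kk : Fin (n * n)) (i o : Fin n) =>
      if finProdFinEquiv.symm kk = (i, o) then ((n : ℝ))⁻¹ else 0) := by
  refine ⟨fun kk => (finProdFinEquiv.symm kk).1, ?_, fun kk => (finProdFinEquiv.symm kk).2, ?_⟩
  · intro i
    exact ⟨finProdFinEquiv (i, ⟨0, hn⟩), by simp⟩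
  · intro kk i o h
    by_cases hc : finProdFinEquiv.symm kk = (i, o)
    · exact ⟨by simp only []; rw [hc], by simp only []; rw [hc]⟩
    · exact absurd (if_neg hc) h

end Glue
/-- **Classical strong independence from settings, and its operational form.**
For a classical process map over the split nodes `Y ∪ Z ∪ W ∪ X`, the do-conditional
marginal `κ^{τ_Z}_{YW do(X)}` factorizes as `η · ξ^{τ_Z}` with `η` independent of
`τ_Z` iff for every do-setting at `X`, every maximally informative intervention at
`W` and every intervention at `Y`, the conditional probability of the `Y` outcome
given the `W` outcome is independent of the choice of intervention at `Z`. -/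
theorem classical_strong_independence_from_settings_iff
    {V : Type} [Fintype V] (val : V → ℕ) (hval : ∀ a, 0 < val a)
    (SY SZ SW SX : Set V)
    (hYZ : Disjoint SY SZ) (hYW : Disjoint SY SW) (hYX : Disjoint SY SX)
    (hZW : Disjoint SZ SW) (hZX : Disjoint SZ SX) (hWX : Disjoint SW SX)
    (hcover : SY ∪ SZ ∪ SW ∪ SX = Set.univ)
    (κ : CAsg V val → ℝ) (hκ : IsCProcess val κ) :
    -- (1) κ^{τ_Z}_{YW do(X)} = η · ξ^{τ_Z}
    (∃ η : CAsg V val → ℝ,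
      DependsOnlyOn {p : V × Bool | p.1 ∈ SY ∨ p.1 ∈ SW ∨ (p.1 ∈ SX ∧ p.2 = true)} η ∧
      ∀ locZ : ∀ a, Fin (val a) → Fin (val a) → ℝ, (∀ a ∈ SZ, IsCChannel (locZ a)) →
        ∃ ξ : CAsg V val → ℝ,
          DependsOnlyOn {p : V × Bool | p.1 ∈ SW ∨ (p.1 ∈ SX ∧ p.2 = true)} ξ ∧
          ∀ ω, cDoMarg val κ SX SZ locZ ω = η ω * ξ ω)
    ↔
    -- (2) conditioned on a maximally informative outcome at `W`, the outcome at `Y`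
    --     is independent of the choice of intervention at `Z`
    (∀ x : ∀ a : ↥SX, Fin (val a.1),
      ∀ (m : V → ℕ) (q : ∀ a, Fin (m a) → Fin (val a) → Fin (val a) → ℝ),
        (∀ a ∈ SY ∪ SW, IsCInstrument (q a)) →
        (∀ a ∈ SW, IsMaxInf (q a)) →
        ∃ afun : (∀ v : ↥(SY ∪ SW), Fin (m v.1)) → ℝ,
          ∀ locZ : ∀ a, Fin (val a) → Fin (val a) → ℝ,
            (∀ a ∈ SZ, IsCChannel (locZ a)) →
            ∃ bfun : (∀ v : ↥SW, Fin (m v.1)) → ℝ,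
              ∀ k : ∀ v : ↥(SY ∪ SW), Fin (m v.1),
                cDoProb val κ SY SZ SW SX x m q locZ k =
                  afun k * bfun (fun w => k ⟨w.1, Or.inr w.2⟩)) := by
  constructor
  · -- (1) → (2)
    rintro ⟨η, hηdep, hfac⟩ x m q hq hmax
    choose gin hsurj gout hsupp using fun w : ↥SW => hmax w.1 w.2
    set t₀ : ∀ p : ↥(TSet SX SZ), Fin (val p.1.1) := fun p => ⟨0, hval p.1.1⟩ with ht₀
    refine ⟨fun k => ∑ σ : ∀ p : {p : V × Bool // p ∉ TSet SX SZ}, Fin (val p.1.1),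
        η (glue (TSet SX SZ) t₀ σ) *
          ((∏ a : ↥SX, if glue (TSet SX SZ) t₀ σ (a.1, true) = x a then (1 : ℝ) else 0) *
            ∏ v : ↥(SY ∪ SW), q v.1 (k v) (glue (TSet SX SZ) t₀ σ (v.1, false))
              (glue (TSet SX SZ) t₀ σ (v.1, true))), ?_⟩
    intro locZ hloc
    obtain ⟨ξ, hξdep, hξ⟩ := hfac locZ hloc
    set wstar : (∀ v : ↥SW, Fin (m v.1)) → CAsg V val := fun kW p =>
      if hW : p.1 ∈ SW then
        (if p.2 then gout ⟨p.1, hW⟩ (kW ⟨p.1, hW⟩) else gin ⟨p.1, hW⟩ (kW ⟨p.1, hW⟩))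
      else if hX : p.1 ∈ SX then (if p.2 then x ⟨p.1, hX⟩ else ⟨0, hval p.1⟩)
      else ⟨0, hval p.1⟩ with hwstar
    refine ⟨fun kW => ξ (wstar kW), ?_⟩
    intro k
    beta_reduce
    rw [cDoProb_glue κ SY SZ SW SX hYZ hYX hZW hZX hWX x m q locZ k t₀,
      Finset.sum_mul]
    refine Finset.sum_congr rfl fun σ _ => ?_
    rw [hξ (glue (TSet SX SZ) t₀ σ)]
    set g := glue (TSet SX SZ) t₀ σ with hg
    set G : ℝ := (∏ a : ↥SX, if g (a.1, true) = x a then (1 : ℝ) else 0) *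
      ∏ v : ↥(SY ∪ SW), q v.1 (k v) (g (v.1, false)) (g (v.1, true)) with hG
    have key : G = 0 ∨ ξ g = ξ (wstar fun w => k ⟨w.1, Or.inr w.2⟩) := by
      by_cases hG0 : G = 0
      · exact Or.inl hG0
      · right
        obtain ⟨hA, hB⟩ := mul_ne_zero_iff.mp hG0
        have hAf : ∀ a : ↥SX, g (a.1, true) = x a := by
          intro a
          have := Finset.prod_ne_zero_iff.mp hA a (Finset.mem_univ a)
          by_contra hc
          rw [if_neg hc] at this
          exact this rfl
        have hBf : ∀ v : ↥(SY ∪ SW),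
            q v.1 (k v) (g (v.1, false)) (g (v.1, true)) ≠ 0 :=
          fun v => Finset.prod_ne_zero_iff.mp hB v (Finset.mem_univ v)
        apply hξdep
        rintro ⟨pv, pb⟩ hp
        rcases hp with hW | ⟨hX', hb⟩
        · have h2 := hsupp ⟨pv, hW⟩ (k ⟨pv, Or.inr hW⟩) _ _ (hBf ⟨pv, Or.inr hW⟩)
          cases pb
          · rw [h2.1]
            simp [hwstar, hW]
          · rw [h2.2]
            simp [hwstar, hW]
        · have hb' : pb = true := hb
          subst hb'
          have hnW : pv ∉ SW := Set.disjoint_right.mp hWX hX'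
          rw [hAf ⟨pv, hX'⟩]
          simp [hwstar, hnW, hX']
    rcases key with h0 | heq
    · rw [h0]; ring
    · rw [heq]; ring
  · -- (2) → (1)
    intro h2
    have hq : ∀ a ∈ SY ∪ SW,
        IsCInstrument (fun (kk : Fin (val a * val a)) (i o : Fin (val a)) =>
          if finProdFinEquiv.symm kk = (i, o) then ((val a : ℝ))⁻¹ else 0) :=
      fun a _ => readout_instrument (hval a)
    have hmax : ∀ a ∈ SW,
        IsMaxInf (fun (kk : Fin (val a * val a)) (i o : Fin (val a)) =>
          if finProdFinEquiv.symm kk = (i, o) then ((val a : ℝ))⁻¹ else 0) :=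
      fun a _ => readout_maxinf (hval a)
    choose afun hafun using fun x => h2 x (fun v => val v * val v)
      (fun a kk i o => if finProdFinEquiv.symm kk = (i, o) then ((val a : ℝ))⁻¹ else 0) hq hmax
    choose bfun hbfun using hafun
    set t₀ : ∀ p : ↥(TSet SX SZ), Fin (val p.1.1) := fun p => ⟨0, hval p.1.1⟩ with ht₀
    have hCC : (∏ v : ↥(SY ∪ SW), (val v.1 : ℝ)) * (∏ v : ↥(SY ∪ SW), ((val v.1 : ℝ))⁻¹)
        = 1 := by
      rw [← Finset.prod_mul_distrib]
      exact Finset.prod_eq_one fun v _ =>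
        mul_inv_cancel₀ (by exact_mod_cast (hval v.1).ne')
    refine ⟨fun ω => (∏ v : ↥(SY ∪ SW), (val v.1 : ℝ)) *
        afun (fun a => ω (a.1, true))
          (fun v => finProdFinEquiv (ω (v.1, false), ω (v.1, true))), ?_, ?_⟩
    · intro ω ω' h
      have hx : (fun a : ↥SX => ω (a.1, true)) = fun a : ↥SX => ω' (a.1, true) :=
        funext fun a => h (a.1, true) (Or.inr (Or.inr ⟨a.2, rfl⟩))
      have hk : (fun v : ↥(SY ∪ SW) => finProdFinEquiv (ω (v.1, false), ω (v.1, true))) =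
          fun v : ↥(SY ∪ SW) => finProdFinEquiv (ω' (v.1, false), ω' (v.1, true)) := by
        funext v
        rcases v.2 with hY | hW
        · rw [h (v.1, false) (Or.inl hY), h (v.1, true) (Or.inl hY)]
        · rw [h (v.1, false) (Or.inr (Or.inl hW)), h (v.1, true) (Or.inr (Or.inl hW))]
      dsimp only
      rw [hx, hk]
    · intro locZ hloc
      refine ⟨fun ω => bfun (fun a => ω (a.1, true)) locZ hloc
          (fun w => finProdFinEquiv (ω (w.1, false), ω (w.1, true))), ?_, ?_⟩
      · intro ω ω' h
        have hx : (fun a : ↥SX => ω (a.1, true)) = fun a : ↥SX => ω' (a.1, true) :=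
          funext fun a => h (a.1, true) (Or.inr ⟨a.2, rfl⟩)
        have hk : (fun w : ↥SW => finProdFinEquiv (ω (w.1, false), ω (w.1, true))) =
            fun w : ↥SW => finProdFinEquiv (ω' (w.1, false), ω' (w.1, true)) := by
          funext w
          rw [h (w.1, false) (Or.inl w.2), h (w.1, true) (Or.inl w.2)]
        dsimp only
        rw [hx, hk]
      · intro ω
        have key : cDoProb val κ SY SZ SW SX (fun a => ω (a.1, true)) (fun v => val v * val v)
            (fun a kk i o => if finProdFinEquiv.symm kk = (i, o) then ((val a : ℝ))⁻¹ else 0)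
            locZ (fun v => finProdFinEquiv (ω (v.1, false), ω (v.1, true)))
            = (∏ v : ↥(SY ∪ SW), ((val v.1 : ℝ))⁻¹) * cDoMarg val κ SX SZ locZ ω := by
          rw [cDoProb_glue κ SY SZ SW SX hYZ hYX hZW hZX hWX _ _ _ locZ _ t₀]
          rw [Finset.sum_eq_single_of_mem (restr (TSet SX SZ) ω) (Finset.mem_univ _) ?side]
          case side =>
            intro σ _ hσ
            beta_reduce
            have hex : ∃ p : {p : V × Bool // p ∉ TSet SX SZ}, σ p ≠ ω p.1 := by
              by_contra hcon
              push_neg at hcon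
              exact hσ (funext fun p => hcon p)
            obtain ⟨⟨⟨pv, pb⟩, hp⟩, hne⟩ := hex
            have hgp : glue (TSet SX SZ) t₀ σ (pv, pb) ≠ ω (pv, pb) := by
              rw [glue_not_mem _ _ hp]; exact hne
            apply mul_eq_zero_of_right
            have hv : pv ∈ SY ∪ SZ ∪ SW ∪ SX := by rw [hcover]; trivial
            rcases hv with ((hY | hZ) | hW) | hX'
            · apply mul_eq_zero_of_right
              apply Finset.prod_eq_zero (Finset.mem_univ (⟨pv, Or.inl hY⟩ : ↥(SY ∪ SW)))
              refine if_neg fun hc => ?_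
              rw [Equiv.symm_apply_apply] at hc
              cases pb
              · exact hgp ((congrArg Prod.fst hc).symm)
              · exact hgp ((congrArg Prod.snd hc).symm)
            · exact absurd (Or.inr hZ) hp
            · apply mul_eq_zero_of_right
              apply Finset.prod_eq_zero (Finset.mem_univ (⟨pv, Or.inr hW⟩ : ↥(SY ∪ SW)))
              refine if_neg fun hc => ?_
              rw [Equiv.symm_apply_apply] at hc
              cases pb
              · exact hgp ((congrArg Prod.fst hc).symm)
              · exact hgp ((congrArg Prod.snd hc).symm)
            · cases pb
              · exact absurd (Or.inl ⟨hX', rfl⟩) hp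
              · apply mul_eq_zero_of_left
                apply Finset.prod_eq_zero (Finset.mem_univ (⟨pv, hX'⟩ : ↥SX))
                exact if_neg hgp
          -- main term
          beta_reduce
          have e1 : ∀ (p : V × Bool) (hp : p ∉ TSet SX SZ),
              glue (TSet SX SZ) t₀ (restr (TSet SX SZ) ω) p = ω p := by
            intro p hp
            rw [glue_not_mem _ _ hp]
            rfl
          have h1 : (∏ a : ↥SX, if glue (TSet SX SZ) t₀ (restr (TSet SX SZ) ω) (a.1, true)
              = ω (a.1, true) then (1 : ℝ) else 0) = 1 :=
            Finset.prod_eq_one fun a _ => by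
              rw [e1 (a.1, true) (notT_of_X hZX a.2)]
              exact if_pos rfl
          have h2' : (∏ v : ↥(SY ∪ SW),
              if finProdFinEquiv.symm (finProdFinEquiv (ω (v.1, false), ω (v.1, true)))
                = (glue (TSet SX SZ) t₀ (restr (TSet SX SZ) ω) (v.1, false),
                   glue (TSet SX SZ) t₀ (restr (TSet SX SZ) ω) (v.1, true))
              then ((val v.1 : ℝ))⁻¹ else 0) = ∏ v : ↥(SY ∪ SW), ((val v.1 : ℝ))⁻¹ :=
            Finset.prod_congr rfl fun v _ => by
              rw [e1 (v.1, false) (notT_of_YW hYZ hYX hZW hWX v.2 false),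
                e1 (v.1, true) (notT_of_YW hYZ hYX hZW hWX v.2 true),
                Equiv.symm_apply_apply]
              exact if_pos rfl
          rw [h1, h2', one_mul, glue_restr, cDoMarg_ovr]
          ring
        beta_reduce
        have hb := hbfun (fun a => ω (a.1, true)) locZ hloc
          (fun v => finProdFinEquiv (ω (v.1, false), ω (v.1, true)))
        dsimp only at hb
        rw [key] at hb
        calc cDoMarg val κ SX SZ locZ ω
            = ((∏ v : ↥(SY ∪ SW), (val v.1 : ℝ)) * ∏ v : ↥(SY ∪ SW), ((val v.1 : ℝ))⁻¹) *
              cDoMarg val κ SX SZ locZ ω := by rw [hCC, one_mul]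
          _ = (∏ v : ↥(SY ∪ SW), (val v.1 : ℝ)) *
              ((∏ v : ↥(SY ∪ SW), ((val v.1 : ℝ))⁻¹) * cDoMarg val κ SX SZ locZ ω) := by ring
          _ = (∏ v : ↥(SY ∪ SW), (val v.1 : ℝ)) *
              (afun (fun a => ω (a.1, true))
                  (fun v => finProdFinEquiv (ω (v.1, false), ω (v.1, true))) *
                bfun (fun a => ω (a.1, true)) locZ hloc
                  (fun w => finProdFinEquiv (ω (w.1, false), ω (w.1, true)))) := by rw [hb]
          _ = _ := by ring

end QCM
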